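/- arXiv:1907.05605 — 2 statements merged into one kernel-verified Lean document; each statement's English description precedes it below -/
import Mathlib

section
/- Let S be a nonempty finite set and let μ_1, μ_2 be probability measures on F_S. If supp(μ_1) = supp(μ_2), then k(μ_1) = k(μ_2). -/
/-! Let `minRank V` be the least image size of a composition of finitely many maps from `V`.
Almost surely every `F_s` lies in `supp μ`, so `k(F) ≥ minRank (supp μ)`. Conversely, fix a word
`g_1, …, g_t` in `supp μ` whose composition attains `minRank (supp μ)`. It has positive
probability, and the disjoint blocks `F_{nt+1}, …, F_{nt+t}` are independent, so by the second
Borel–Cantelli lemma some block equals the word, after which the image size is at most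
`minRank (supp μ)`. Hence `k(μ) = minRank (supp μ)`. -/

open MeasureTheory

namespace CFTP

variable {S : Type*}

/-- Forward composition `f_t ∘ f_{t-1} ∘ ⋯ ∘ f_1` (functions are indexed by 1,2,…). -/
def fwd (f : ℕ → S → S) : ℕ → S → S
  | 0 => id
  | t + 1 => f (t + 1) ∘ fwd f t

/-- Backward composition `f_1 ∘ f_2 ∘ ⋯ ∘ f_t`. -/
def bwd (f : ℕ → S → S) : ℕ → S → S
  | 0 => id
  | t + 1 => bwd f t ∘ f (t + 1)

/-- `k_t(f⃗)`: the number of equivalence classes of `i ~ j ↔ f⃗_t i = f⃗_t j`,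
i.e. the cardinality of the image of the forward composition. -/
noncomputable def ktF (f : ℕ → S → S) (t : ℕ) : ℕ := Set.ncard (Set.range (fwd f t))

/-- `k_t(f⃖)`: the cardinality of the image of the backward composition. -/
noncomputable def ktB (f : ℕ → S → S) (t : ℕ) : ℕ := Set.ncard (Set.range (bwd f t))

/-- `k(f⃗)`: the eventual (= minimal) value of the non-increasing sequence `k_t(f⃗)`. -/
noncomputable def kF (f : ℕ → S → S) : ℕ := ⨅ t, ktF f t

/-- `k(f⃖)`. -/
noncomputable def kB (f : ℕ → S → S) : ℕ := ⨅ t, ktB f t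

/-- `μbar` is the joint law of an i.i.d. sequence with one-step law `ν`,
i.e. the countable product measure `∏_{s ∈ ℕ} ν`, characterised by its
values on cylinder events. -/
def IsIID [MeasurableSpace S] (ν : Measure (S → S)) (μbar : Measure (ℕ → S → S)) : Prop :=
  ∀ (I : Finset ℕ) (g : ℕ → S → S),
    μbar {F | ∀ s ∈ I, F s = g s} = ∏ s ∈ I, ν {g s}

/-- The support of a probability measure on the finite set `F_S`. -/
def supp [MeasurableSpace S] (ν : Measure (S → S)) : Set (S → S) := {f | 0 < ν {f}}

/-- A stochastic matrix: nonnegative entries, row sums one. -/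
def IsStochastic [Fintype S] (P : S → S → ℝ) : Prop :=
  (∀ i j, 0 ≤ P i j) ∧ ∀ i, ∑ j, P i j = 1

/-- `ν ∈ L(P)`: the measure `ν` on `F_S` is consistent with the matrix `P`. -/
def Consistent [Fintype S] [MeasurableSpace S] (P : S → S → ℝ) (ν : Measure (S → S)) : Prop :=
  ∀ i j, ν {f : S → S | f i = j} = ENNReal.ofReal (P i j)

/-- Irreducibility: for all `i j` some power of `P` has positive `(i,j)` entry. -/
def Irred [Fintype S] [DecidableEq S] (P : S → S → ℝ) : Prop :=
  ∀ i j, ∃ t, 1 ≤ t ∧ 0 < ((Matrix.of P) ^ t) i j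

/-- Aperiodicity: for each `i`, the gcd of `{t ≥ 1 : (P^t)_{i,i} > 0}` is `1`,
expressed as: every common divisor of that set equals `1`. -/
def Aperiodic [Fintype S] [DecidableEq S] (P : S → S → ℝ) : Prop :=
  ∀ i, ∀ d : ℕ, (∀ t, 1 ≤ t → 0 < ((Matrix.of P) ^ t) i i → d ∣ t) → d = 1

/-- A function is constant. -/
def IsConst (g : S → S) : Prop := ∀ i j, g i = g j

/-- The backward coalescence time `C`. -/
noncomputable def Ctime (F : ℕ → S → S) : ℕ∞ :=
  sInf ((fun t : ℕ => (t : ℕ∞)) '' {t : ℕ | 1 ≤ t ∧ IsConst (bwd F t)})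

/-- The forward coalescence time `T`. -/
noncomputable def Ttime (F : ℕ → S → S) : ℕ∞ :=
  sInf ((fun t : ℕ => (t : ℕ∞)) '' {t : ℕ | 1 ≤ t ∧ IsConst (fwd F t)})

/-- The 0-1 matrix `M_f`. -/
noncomputable def Mmat [Fintype S] [DecidableEq S] (f : S → S) : Matrix S S ℝ :=
  Matrix.of fun i j => if f i = j then 1 else 0

/-- The product `M_{f_t} M_{f_{t-1}} ⋯ M_{f_1}`. -/
noncomputable def Mprod [Fintype S] [DecidableEq S] (f : ℕ → S → S) : ℕ → Matrix S S ℝ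
  | 0 => 1
  | t + 1 => Mmat (f (t + 1)) * Mprod f t

/-- The event that states `i` and `j` coalesce. -/
def coalEvent (i j : S) : Set (ℕ → S → S) := {F | ∃ t, 1 ≤ t ∧ fwd F t i = fwd F t j}

open ProbabilityTheory Filter

theorem fwd_congr {f g : ℕ → S → S} {t : ℕ} (h : ∀ s, 1 ≤ s → s ≤ t → f s = g s) :
    fwd f t = fwd g t := by
  induction t with
  | zero => rfl
  | succ t ih =>
    simp only [fwd, h (t + 1) (by omega) le_rfl, ih fun s h₁ h₂ => h s h₁ (by omega)]

theorem fwd_add (f : ℕ → S → S) (a b : ℕ) :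
    fwd f (a + b) = fwd (fun s => f (a + s)) b ∘ fwd f a := by
  induction b with
  | zero => rfl
  | succ b ih =>
    change f (a + b + 1) ∘ fwd f (a + b) = f (a + (b + 1)) ∘ _
    rw [ih]; rfl

theorem ktF_add_le [Finite S] (f : ℕ → S → S) (a b : ℕ) :
    ktF f (a + b) ≤ ktF (fun s => f (a + s)) b := by
  rw [ktF, ktF, fwd_add]
  exact Set.ncard_le_ncard (Set.range_comp_subset_range _ _) (Set.toFinite _)

def rankSet (V : Set (S → S)) : Set ℕ :=
  {n | ∃ (f : ℕ → S → S) (t : ℕ), (∀ s, 1 ≤ s → s ≤ t → f s ∈ V) ∧ ktF f t = n}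

noncomputable def minRank (V : Set (S → S)) : ℕ := sInf (rankSet V)

theorem rankSet_nonempty (V : Set (S → S)) : (rankSet V).Nonempty :=
  ⟨_, fun _ => id, 0, fun _ h₁ h₀ => absurd (h₁.trans h₀) (by omega), rfl⟩

theorem minRank_le_kF {V : Set (S → S)} {F : ℕ → S → S} (hF : ∀ s, F s ∈ V) :
    minRank V ≤ kF F :=
  le_ciInf fun t => Nat.sInf_le ⟨F, t, fun s _ _ => hF s, rfl⟩

theorem kF_le_ktF_of_block [Finite S] {F g : ℕ → S → S} {a t : ℕ}
    (h : ∀ s, 1 ≤ s → s ≤ t → F (a + s) = g s) : kF F ≤ ktF g t :=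
  calc kF F ≤ ktF F (a + t) := ciInf_le (OrderBot.bddBelow _) _
    _ ≤ ktF (fun s => F (a + s)) t := ktF_add_le F a t
    _ = ktF g t := by rw [ktF, ktF, fwd_congr h]

theorem ae_exists_eq_of_measure_singleton_ne_zero {Y : Type*} [MeasurableSpace Y]
    [MeasurableSingletonClass Y] {ρ : Measure Y} [IsProbabilityMeasure ρ] {y : Y}
    (hy : ρ {y} ≠ 0) : ∀ᵐ ψ ∂(Measure.infinitePi fun _ : ℕ => ρ), ∃ n, ψ n = y := by
  let C : ℕ → Set (ℕ → Y) := fun n => (fun ψ => ψ n) ⁻¹' {y}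
  have hC : ∀ n, MeasurableSet (C n) := fun n => measurable_pi_apply n (measurableSet_singleton y)
  have hinter : ∀ s : Finset ℕ,
      Measure.infinitePi (fun _ => ρ) (⋂ n ∈ s, C n) = ∏ _n ∈ s, ρ {y} := fun s => by
    rw [← Measure.infinitePi_pi (μ := fun _ => ρ) fun _ _ => measurableSet_singleton y]
    congr 1; ext ψ; simp [C]
  have hCn : ∀ n, Measure.infinitePi (fun _ => ρ) (C n) = ρ {y} := fun n => by
    simpa using hinter {n}
  have hindep : iIndepSet C (Measure.infinitePi fun _ => ρ) :=
    (iIndepSet_iff_meas_biInter hC).2 fun s => by simp only [hinter, hCn]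
  have hlimsup : Measure.infinitePi (fun _ => ρ) (limsup C atTop) = 1 :=
    measure_limsup_eq_one hC hindep (by simp [hCn, ENNReal.tsum_const_eq_top_of_ne_zero hy])
  have hae := (ae_mem_iff_measure_eq (MeasurableSet.measurableSet_limsup hC).nullMeasurableSet).2
    (by rw [hlimsup, measure_univ])
  filter_upwards [hae] with ψ hψ
  exact (mem_limsup_iff_frequently_mem.1 hψ).exists

theorem mul_add_fin_add_one_injective (t : ℕ) :
    Function.Injective fun p : ℕ × Fin t => p.1 * t + p.2 + 1 := by
  rintro ⟨a, i⟩ ⟨b, j⟩ h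
  replace h : a * t + i = b * t + j := by simpa using h
  obtain rfl : a = b := by
    rcases lt_trichotomy a b with hab | hab | hab
    · nlinarith [Nat.mul_le_mul_right t hab, i.2]
    · exact hab
    · nlinarith [Nat.mul_le_mul_right t hab, j.2]
  simpa [Fin.ext_iff] using h

theorem ae_exists_block_eq {X : Type*} [MeasurableSpace X] [MeasurableSingletonClass X]
    {ν : Measure X} [IsProbabilityMeasure ν] {t : ℕ} {w : Fin t → X} (hw : ∀ i, ν {w i} ≠ 0) :
    ∀ᵐ ω ∂(Measure.infinitePi fun _ : ℕ => ν), ∃ n, ∀ i : Fin t, ω (n * t + i + 1) = w i := by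
  let blocks : (ℕ → X) → ℕ → Fin t → X := fun ω n i => ω (n * t + i + 1)
  have hblocks : Measurable blocks := by fun_prop
  have hmap : (Measure.infinitePi fun _ => ν).map blocks =
      Measure.infinitePi fun _ : ℕ => Measure.infinitePi fun _ : Fin t => ν := by
    have : blocks = MeasurableEquiv.curry ℕ (Fin t) X ∘ fun ω p => ω (p.1 * t + p.2 + 1) := rfl
    rw [this, ← Measure.map_map (by fun_prop) (by fun_prop),
      Measure.map_infinitePi_infinitePi_of_inj (mul_add_fin_add_one_injective t),
      Measure.infinitePi_map_curry (fun _ _ => ν)]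
  have hw' : Measure.infinitePi (fun _ : Fin t => ν) {w} ≠ 0 := by
    rw [← Set.univ_pi_singleton, ← Finset.coe_univ,
      Measure.infinitePi_pi (μ := fun _ => ν) fun _ _ => measurableSet_singleton _]
    exact Finset.prod_ne_zero_iff.2 fun i _ => hw i
  have := ae_exists_eq_of_measure_singleton_ne_zero hw'
  rw [← hmap] at this
  filter_upwards [ae_of_ae_map hblocks.aemeasurable this] with ω ⟨n, hn⟩
  exact ⟨n, fun i => congrFun hn i⟩

section IID

variable [Finite S] [MeasurableSpace S]

theorem IsIID.eq_infinitePi [MeasurableSingletonClass S] {ν : Measure (S → S)}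
    [IsProbabilityMeasure ν] {μbar : Measure (ℕ → S → S)} (h : IsIID ν μbar) : μbar = Measure.infinitePi fun _ => ν := by
  classical
  refine IsProjectiveLimit.unique (fun I => Measure.ext_of_singleton fun φ => ?_)
    (Measure.isProjectiveLimit_infinitePi _)
  let g : ℕ → S → S := fun s => if hs : s ∈ I then φ ⟨s, hs⟩ else id
  have hcyl : (I.restrict (π := fun _ => S → S)) ⁻¹' {φ} = {F | ∀ s ∈ I, F s = g s} := by
    ext F
    simp +contextual [g, funext_iff]
  rw [Measure.map_apply (Finset.measurable_restrict I) (measurableSet_singleton φ), hcyl, h,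
    Measure.pi_singleton, ← Finset.prod_coe_sort]
  simp [g]

theorem ae_mem_supp (ν : Measure (S → S)) [IsProbabilityMeasure ν] :
    ∀ᵐ F ∂(Measure.infinitePi fun _ : ℕ => ν), ∀ s, F s ∈ supp ν := by
  refine ae_all_iff.2 fun s => ae_of_ae_map (measurable_pi_apply s).aemeasurable ?_
  rw [Measure.infinitePi_map_eval]
  exact ae_iff_of_countable.2 fun f hf => pos_iff_ne_zero.2 hf

theorem ae_kF_eq_minRank [MeasurableSingletonClass S] (ν : Measure (S → S))
    [IsProbabilityMeasure ν] :
    ∀ᵐ F ∂(Measure.infinitePi fun _ : ℕ => ν), kF F = minRank (supp ν) := by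
  obtain ⟨g, t, hg, hgt⟩ := Nat.sInf_mem (rankSet_nonempty (supp ν))
  have hblock := ae_exists_block_eq (ν := ν) (w := fun i : Fin t => g (i + 1))
    fun i => (hg _ (by omega) (by omega)).ne'
  filter_upwards [ae_mem_supp ν, hblock] with F hF ⟨n, hn⟩
  refine le_antisymm ?_ (minRank_le_kF hF)
  refine (kF_le_ktF_of_block (a := n * t) fun s h₁ h₂ => ?_).trans_eq hgt
  obtain ⟨i, rfl⟩ : ∃ i : Fin t, s = i + 1 := ⟨⟨s - 1, by omega⟩, (Nat.sub_add_cancel h₁).symm⟩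
  simpa [add_assoc] using hn i

theorem IsIID.eq_minRank_supp_of_measure_eq_one [MeasurableSingletonClass S]
    {ν : Measure (S → S)} [IsProbabilityMeasure ν] {μbar : Measure (ℕ → S → S)}
    (h : IsIID ν μbar) {k : ℕ} (hk : μbar {F | kF F = k} = 1) :
    k = minRank (supp ν) := by
  rw [h.eq_infinitePi] at hk
  obtain ⟨F, hFk, hF⟩ :=
    Measure.exists_mem_of_measure_ne_zero_of_ae (hk ▸ one_ne_zero)
      (ae_restrict_of_ae (ae_kF_eq_minRank ν))
  exact hFk ▸ hF

end IID

theorem stmt5_general [Fintype S] [MeasurableSpace S] [DiscreteMeasurableSpace S]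
    (ν₁ ν₂ : Measure (S → S)) [IsProbabilityMeasure ν₁] [IsProbabilityMeasure ν₂]
    (μbar₁ μbar₂ : Measure (ℕ → S → S))
    (h₁ : IsIID ν₁ μbar₁) (h₂ : IsIID ν₂ μbar₂)
    (k₁ k₂ : ℕ)
    (hk₁ : μbar₁ {F | kF F = k₁} = 1) (hk₂ : μbar₂ {F | kF F = k₂} = 1)
    (hsupp : supp ν₁ = supp ν₂) :
    k₁ = k₂ := by
  rw [h₁.eq_minRank_supp_of_measure_eq_one hk₁, h₂.eq_minRank_supp_of_measure_eq_one hk₂, hsupp]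

theorem stmt5 [Fintype S] [Nonempty S] [MeasurableSpace S] [DiscreteMeasurableSpace S]
    (ν₁ ν₂ : Measure (S → S)) [IsProbabilityMeasure ν₁] [IsProbabilityMeasure ν₂]
    (μbar₁ μbar₂ : Measure (ℕ → S → S))
    [IsProbabilityMeasure μbar₁] [IsProbabilityMeasure μbar₂]
    (h₁ : IsIID ν₁ μbar₁) (h₂ : IsIID ν₂ μbar₂)
    (k₁ k₂ : ℕ)
    (hk₁ : μbar₁ {F | kF F = k₁} = 1) (hk₂ : μbar₂ {F | kF F = k₂} = 1)
    (hsupp : supp ν₁ = supp ν₂) :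
    k₁ = k₂ :=
  stmt5_general ν₁ ν₂ μbar₁ μbar₂ h₁ h₂ k₁ k₂ hk₁ hk₂ hsupp

end CFTP
end

section
/- Let S be a finite set with |S| = n ≥ 2, let P_n be the stochastic matrix on S with all entries equal to 1/n, and let l ≥ 1 divide n. Then there exists a block measure μ consistent with P_n having coalescence number k(μ) = l; in particular, K(P_n) contains every divisor of n. -/
open MeasureTheory

namespace CFTP

variable {S : Type*}

/-! Fix `e : S ≃ Fin l × Fin m` (with `n = l * m`) and take the blocks to be the fibres of `(e ·).1`.
The maps `i ↦ e⁻¹((e i).1 + a, c)`, with `(a, c)` uniform on `Fin l × Fin m`, permute the blocks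
cyclically and collapse each block to a single point. For fixed `i` the parameter `(a, c)` is a
bijective function of the image of `i`, so that image is uniform on `S`: the measure is consistent
with `P_n`. The family is closed under composition and every member has exactly `l` image points,
so `k_t = l` for all `t ≥ 1` along every sequence drawn from it, hence almost surely. -/

open scoped ENNReal

section Coalescence

lemma ktF_zero (F : ℕ → S → S) : ktF F 0 = Nat.card S := by
  rw [ktF, fwd, Set.range_id, Set.ncard_univ]

lemma kF_eq_of_forall_mem {G : Set (S → S)} {l : ℕ} (hG : ∀ f ∈ G, ∀ g ∈ G, g ∘ f ∈ G)
    (hGl : ∀ f ∈ G, (Set.range f).ncard = l) (hl : l ≤ Nat.card S) {F : ℕ → S → S}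
    (hF : ∀ s, F s ∈ G) : kF F = l := by
  have hfwd : ∀ t, fwd F (t + 1) ∈ G := by
    intro t
    induction t with
    | zero => exact hF 1
    | succ t ih => exact hG _ ih _ (hF _)
  refine le_antisymm (ciInf_le_of_le (OrderBot.bddBelow _) 1 (hGl _ (hfwd 0)).le) ?_
  refine le_ciInf fun t => ?_
  cases t with
  | zero => exact (ktF_zero F).symm ▸ hl
  | succ t => exact (hGl _ (hfwd t)).ge

variable [MeasurableSpace S]

lemma supp_subset_of_ae_mem {ν : Measure (S → S)} {A : Set (S → S)} (hA : ∀ᵐ f ∂ν, f ∈ A) :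
    supp ν ⊆ A := fun f hf => by
  by_contra hfA
  exact hf.ne' (measure_mono_null (Set.singleton_subset_iff.2 hfA) (ae_iff.1 hA))

lemma isIID_infinitePi [MeasurableSingletonClass (S → S)] (ν : Measure (S → S))
    [IsProbabilityMeasure ν] : IsIID ν (Measure.infinitePi fun _ : ℕ => ν) := by
  intro I g
  have hcyl : {F : ℕ → S → S | ∀ s ∈ I, F s = g s} = Set.pi I fun s => {g s} := by
    ext F
    simp
  rw [hcyl, Measure.infinitePi_pi _ fun s _ => measurableSet_singleton (g s)]

end Coalescence

lemma ae_forall_mem_of_ae_mem {X : Type*} [MeasurableSpace X] (ν : Measure X)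
    [IsProbabilityMeasure ν] {A : Set X} (hA : ∀ᵐ x ∂ν, x ∈ A) :
    ∀ᵐ F ∂(Measure.infinitePi fun _ : ℕ => ν), ∀ s, F s ∈ A :=
  ae_all_iff.2 fun s => ae_of_ae_map (measurable_pi_apply s).aemeasurable
    (by rwa [Measure.infinitePi_map_eval])

section BlockShift

variable {l m : ℕ} (e : S ≃ Fin l × Fin m)

def blockShift (t : Fin l × Fin m) (i : S) : S := e.symm ((e i).1 + t.1, t.2)

lemma fst_blockShift (t : Fin l × Fin m) (i : S) : (e (blockShift e t i)).1 = (e i).1 + t.1 := by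
  simp [blockShift]

variable [NeZero l]

lemma blockShift_comp (t t' : Fin l × Fin m) :
    blockShift e t' ∘ blockShift e t = blockShift e (t.1 + t'.1, t'.2) := by
  funext i
  simp [blockShift, add_assoc]

lemma ncard_range_blockShift (t : Fin l × Fin m) : (Set.range (blockShift e t)).ncard = l := by
  have hrange : Set.range (blockShift e t) = Set.range fun r : Fin l => e.symm (r, t.2) := by
    ext j
    constructor
    · rintro ⟨i, rfl⟩
      exact ⟨(e i).1 + t.1, rfl⟩
    · rintro ⟨r, rfl⟩
      exact ⟨e.symm (r - t.1, t.2), by simp [blockShift]⟩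
  rw [hrange, Set.ncard_range_of_injective fun r r' h => congrArg Prod.fst (e.symm.injective h),
    Nat.card_fin]

def blockShiftEval (i : S) : Fin l × Fin m ≃ S :=
  (Equiv.prodCongr (Equiv.addLeft (e i).1) (Equiv.refl _)).trans e.symm

lemma blockShift_apply_eq_iff (t : Fin l × Fin m) (i j : S) :
    blockShift e t i = j ↔ t = (blockShiftEval e i).symm j :=
  (blockShiftEval e i).eq_symm_apply.symm

variable [NeZero m]

lemma kF_eq_of_forall_mem_range_blockShift {F : ℕ → S → S}
    (hF : ∀ s, F s ∈ Set.range (blockShift e)) : kF F = l := by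
  refine kF_eq_of_forall_mem ?_ ?_ ?_ hF
  · rintro _ ⟨t, rfl⟩ _ ⟨t', rfl⟩
    exact ⟨_, (blockShift_comp e t t').symm⟩
  · rintro _ ⟨t, rfl⟩
    exact ncard_range_blockShift e t
  · rw [Nat.card_congr e, Nat.card_prod, Nat.card_fin, Nat.card_fin]
    exact Nat.le_mul_of_pos_right l (NeZero.pos m)

variable [MeasurableSpace S]

noncomputable def blockShiftMeasure : Measure (S → S) :=
  (PMF.uniformOfFintype (Fin l × Fin m)).toMeasure.map (blockShift e)

instance : IsProbabilityMeasure (blockShiftMeasure e) :=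
  Measure.isProbabilityMeasure_map (measurable_of_countable _).aemeasurable

lemma ae_mem_range_blockShift [DiscreteMeasurableSpace S] [Finite S] :
    ∀ᵐ f ∂blockShiftMeasure e, f ∈ Set.range (blockShift e) :=
  ae_map_mem_range _ (Set.to_countable _).measurableSet _

lemma blockShiftMeasure_eval_eq [DiscreteMeasurableSpace S] [Finite S] (i j : S) :
    blockShiftMeasure e {f | f i = j} = (Nat.card S : ℝ≥0∞)⁻¹ := by
  rw [blockShiftMeasure, Measure.map_apply (measurable_of_countable _) (Set.to_countable _).measurableSet]
  have hpre : blockShift e ⁻¹' {f | f i = j} = {(blockShiftEval e i).symm j} := by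
    ext t
    exact blockShift_apply_eq_iff e t i j
  rw [hpre, PMF.toMeasure_apply_singleton _ _ (measurableSet_singleton _),
    PMF.uniformOfFintype_apply, ← Nat.card_eq_fintype_card, Nat.card_congr e]

lemma consistent_blockShiftMeasure [DiscreteMeasurableSpace S] [Fintype S] :
    Consistent (fun _ _ => (1 : ℝ) / Fintype.card S) (blockShiftMeasure e) := by
  have : Nonempty S := ⟨e.symm 0⟩
  intro i j
  rw [blockShiftMeasure_eval_eq, one_div, ENNReal.ofReal_inv_of_pos (by positivity),
    ENNReal.ofReal_natCast, Nat.card_eq_fintype_card]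

end BlockShift

section Blocks

variable [Fintype S] {l m : ℕ} (e : S ≃ Fin l × Fin m)

def block (r : Fin l) : Finset S := Finset.univ.filter fun i => (e i).1 = r

lemma mem_block {r : Fin l} {i : S} : i ∈ block e r ↔ (e i).1 = r := by
  simp [block]

lemma block_nonempty [NeZero m] (r : Fin l) : (block e r).Nonempty :=
  ⟨e.symm (r, 0), (mem_block e).2 (by simp)⟩

lemma disjoint_block {r s : Fin l} (hrs : r ≠ s) : Disjoint (block e r) (block e s) :=
  Finset.disjoint_left.2 fun _ hr hs => hrs (((mem_block e).1 hr).symm.trans ((mem_block e).1 hs))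

lemma blockShift_mem_block (t : Fin l × Fin m) {r : Fin l} {i : S} (hi : i ∈ block e r) :
    blockShift e t i ∈ block e (r + t.1) :=
  (mem_block e).2 (by rw [fst_blockShift, (mem_block e).1 hi])

end Blocks

theorem stmt17_general [Fintype S]
    [MeasurableSpace S] [DiscreteMeasurableSpace S]
    (n l : ℕ) (hcard : Fintype.card S = n) (hn : 2 ≤ n)
    (hdvd : l ∣ n) :
    ∃ ν : Measure (S → S), IsProbabilityMeasure ν ∧
      Consistent (fun _ _ => (1 : ℝ) / n) ν ∧
      ∃ B : Fin l → Finset S,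
        (∀ r, (B r).Nonempty) ∧
        (∀ r s, r ≠ s → Disjoint (B r) (B s)) ∧
        (∀ i : S, ∃ r, i ∈ B r) ∧
        (∀ f ∈ supp ν, ∃ π : Equiv.Perm (Fin l), ∀ r, ∀ i ∈ B r, f i ∈ B (π r)) ∧
        ∃ μbar : Measure (ℕ → S → S), IsProbabilityMeasure μbar ∧ IsIID ν μbar ∧
          μbar {F | kF F = l} = 1 := by
  obtain ⟨m, rfl⟩ := hdvd
  have : NeZero l := ⟨by rintro rfl; omega⟩
  have : NeZero m := ⟨by rintro rfl; omega⟩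
  let e : S ≃ Fin l × Fin m := Fintype.equivOfCardEq (by simp [hcard])
  refine ⟨blockShiftMeasure e, inferInstance, hcard ▸ consistent_blockShiftMeasure e, block e,
    block_nonempty e, fun _ _ => disjoint_block e, fun i => ⟨_, (mem_block e).2 rfl⟩, ?_,
    Measure.infinitePi fun _ => blockShiftMeasure e, inferInstance, isIID_infinitePi _, ?_⟩
  · intro f hf
    obtain ⟨t, rfl⟩ := supp_subset_of_ae_mem (ae_mem_range_blockShift e) hf
    exact ⟨Equiv.addRight t.1, fun _ _ hi => blockShift_mem_block e t hi⟩
  · have hk := (ae_forall_mem_of_ae_mem _ (ae_mem_range_blockShift e)).mono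
      fun _ hF => kF_eq_of_forall_mem_range_blockShift e hF
    exact (measure_congr (ae_eq_univ.2 (ae_iff.1 hk))).trans measure_univ

theorem stmt17 [Fintype S] [DecidableEq S]
    [MeasurableSpace S] [DiscreteMeasurableSpace S]
    (n l : ℕ) (hcard : Fintype.card S = n) (hn : 2 ≤ n)
    (hl : 1 ≤ l) (hdvd : l ∣ n) :
    ∃ ν : Measure (S → S), IsProbabilityMeasure ν ∧
      Consistent (fun _ _ => (1 : ℝ) / n) ν ∧
      ∃ B : Fin l → Finset S,
        (∀ r, (B r).Nonempty) ∧
        (∀ r s, r ≠ s → Disjoint (B r) (B s)) ∧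
        (∀ i : S, ∃ r, i ∈ B r) ∧
        (∀ f ∈ supp ν, ∃ π : Equiv.Perm (Fin l), ∀ r, ∀ i ∈ B r, f i ∈ B (π r)) ∧
        ∃ μbar : Measure (ℕ → S → S), IsProbabilityMeasure μbar ∧ IsIID ν μbar ∧
          μbar {F | kF F = l} = 1 :=
  stmt17_general n l hcard hn hdvd

end CFTP
end
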